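/- arXiv:1408.5524 — 5 statements merged into one kernel-verified Lean document; each statement's English description precedes it below -/
import Mathlib

section
/- Let K : ℝ → ℝ and g : ℝ → ℝ be continuous on [1,∞) with 0 ≤ K(τ) ≤ 1 and g(τ) ≥ 0 for all τ ≥ 1. Then the function t ↦ m(t) := (1/2)∫₁ᵗ (1 − K(τ)·exp(−∫_τ^t g(s) ds)) dτ is monotone nondecreasing on [1,∞). -/
open MeasureTheory intervalIntegral Real

/-- monotonicity of the asphericity mass
`m(t) = (1/2)∫₁ᵗ (1 − K(τ)·exp(−∫_τ^t g)) dτ` on `[1,∞)`. -/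
theorem asphericity_mass_monotone
    (K g : ℝ → ℝ)
    (hKcont : ContinuousOn K (Set.Ici 1))
    (hgcont : ContinuousOn g (Set.Ici 1))
    (hK0 : ∀ τ : ℝ, 1 ≤ τ → 0 ≤ K τ)
    (hK1 : ∀ τ : ℝ, 1 ≤ τ → K τ ≤ 1)
    (hg : ∀ τ : ℝ, 1 ≤ τ → 0 ≤ g τ) :
    MonotoneOn (fun t : ℝ =>
      (1 / 2) * ∫ τ in (1:ℝ)..t,
        (1 - K τ * Real.exp (-∫ s in τ..t, g s))) (Set.Ici 1) := by
  -- interval integrability of g on subintervals of [1, ∞)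
  have gint : ∀ a b : ℝ, 1 ≤ a → a ≤ b → IntervalIntegrable g volume a b := by
    intro a b ha hab
    apply ContinuousOn.intervalIntegrable
    apply hgcont.mono
    rw [Set.uIcc_of_le hab]
    exact fun x hx => le_trans ha hx.1
  -- integrability of the integrand
  have Fint : ∀ t b : ℝ, 1 ≤ t → 1 ≤ b → b ≤ t →
      IntervalIntegrable (fun τ => 1 - K τ * Real.exp (-∫ s in τ..t, g s)) volume 1 b := by
    intro t b ht hb hbt
    apply ContinuousOn.intervalIntegrable
    have hsub : Set.uIcc (1:ℝ) b ⊆ Set.Ici 1 := by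
      rw [Set.uIcc_of_le hb]; exact fun x hx => hx.1
    have hG : ContinuousOn (fun τ => ∫ s in τ..t, g s) (Set.uIcc (1:ℝ) b) := by
      have : ContinuousOn (fun τ => ∫ s in τ..t, g s) (Set.uIcc (1:ℝ) t) := by
        apply continuousOn_primitive_interval_left
        rw [Set.uIcc_of_le ht]
        exact (hgcont.mono (fun x hx => hx.1)).integrableOn_Icc
      apply this.mono
      rw [Set.uIcc_of_le hb, Set.uIcc_of_le ht]
      exact Set.Icc_subset_Icc le_rfl hbt
    exact continuousOn_const.sub ((hKcont.mono hsub).mul (Real.continuous_exp.comp_continuousOn hG.neg))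
  -- nonnegativity of the integrand for 1 ≤ τ ≤ t
  have Fnonneg : ∀ t τ : ℝ, 1 ≤ τ → τ ≤ t →
      0 ≤ 1 - K τ * Real.exp (-∫ s in τ..t, g s) := by
    intro t τ hτ hτt
    have hI : 0 ≤ ∫ s in τ..t, g s :=
      intervalIntegral.integral_nonneg hτt (fun u hu => hg u (le_trans hτ hu.1))
    have hexp : Real.exp (-∫ s in τ..t, g s) ≤ 1 := by
      rw [← Real.exp_zero]
      exact Real.exp_le_exp.mpr (by linarith)
    have := mul_le_one₀ (hK1 τ hτ) (Real.exp_nonneg _) hexp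
    nlinarith [hK0 τ hτ, Real.exp_pos (-∫ s in τ..t, g s)]
  intro t₁ ht₁ t₂ ht₂ h12
  simp only [Set.mem_Ici] at ht₁ ht₂
  have key1 : (∫ τ in (1:ℝ)..t₁, (1 - K τ * Real.exp (-∫ s in τ..t₁, g s)))
      ≤ ∫ τ in (1:ℝ)..t₁, (1 - K τ * Real.exp (-∫ s in τ..t₂, g s)) := by
    apply intervalIntegral.integral_mono_on ht₁ (Fint t₁ t₁ ht₁ ht₁ le_rfl)
      (Fint t₂ t₁ ht₂ ht₁ h12)
    intro τ hτ
    have hI : (∫ s in τ..t₁, g s) ≤ ∫ s in τ..t₂, g s := by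
      have hadd := intervalIntegral.integral_add_adjacent_intervals
        (gint τ t₁ hτ.1 hτ.2) (gint t₁ t₂ ht₁ h12)
      have hpos : 0 ≤ ∫ s in t₁..t₂, g s :=
        intervalIntegral.integral_nonneg h12 (fun u hu => hg u (le_trans ht₁ hu.1))
      linarith
    have hexp : Real.exp (-∫ s in τ..t₂, g s) ≤ Real.exp (-∫ s in τ..t₁, g s) :=
      Real.exp_le_exp.mpr (by linarith)
    nlinarith [hK0 τ hτ.1]
  have key2 : (∫ τ in (1:ℝ)..t₁, (1 - K τ * Real.exp (-∫ s in τ..t₂, g s)))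
      ≤ ∫ τ in (1:ℝ)..t₂, (1 - K τ * Real.exp (-∫ s in τ..t₂, g s)) := by
    have hadd := intervalIntegral.integral_add_adjacent_intervals
      (Fint t₂ t₁ ht₂ ht₁ h12)
      (((Fint t₂ t₂ ht₂ ht₂ le_rfl)).mono_set (by rw [Set.uIcc_of_le h12, Set.uIcc_of_le ht₂]; exact Set.Icc_subset_Icc ht₁ le_rfl))
    have hpos : 0 ≤ ∫ τ in t₁..t₂, (1 - K τ * Real.exp (-∫ s in τ..t₂, g s)) :=
      intervalIntegral.integral_nonneg h12
        (fun u hu => Fnonneg t₂ u (le_trans ht₁ hu.1) hu.2)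
    linarith
  simp only
  linarith
end

section
/- Let K, g : ℝ → ℝ be continuous on [1,∞) and suppose there exist constants c > 0 and C > 0 such that 1 − C·e^{−cτ} ≤ K(τ) ≤ 1 and 0 ≤ g(s) ≤ C·s·e^{−cs} for all τ, s ≥ 1. Then there exists a finite real number L ≥ 0 such that m(t) := (1/2)∫₁ᵗ (1 − K(τ)·exp(−∫_τ^t g(s) ds)) dτ converges to L as t → ∞. -/
/-!
Dominated convergence on the growing intervals `[1, t]`. Since `K ≤ 1` and `∫_τ^t g ≥ 0`,
the integrand `1 - K(τ) e^{-∫_τ^t g}` lies between `0` and `(1 - K(τ)) + ∫_τ^∞ g`, which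
decays exponentially in `τ`; and it converges pointwise to `1 - K(τ) e^{-∫_τ^∞ g}`.
Hence `m(t)` tends to `L = ½ ∫_1^∞ (1 - K(τ) e^{-∫_τ^∞ g})`, which is nonnegative.
-/

open MeasureTheory intervalIntegral Real Filter Set
open scoped Topology

lemma one_sub_mul_exp_neg_nonneg {k x : ℝ} (hk : k ≤ 1) (hx : 0 ≤ x) :
    0 ≤ 1 - k * exp (-x) := by
  have h_exp_le : exp (-x) ≤ 1 := exp_le_one_iff.2 (neg_nonpos.2 hx)
  nlinarith [exp_pos (-x)]

-- `1 - k e^{-x} = (1 - k) e^{-x} + (1 - e^{-x})`, with the two terms at most `1 - k` and `x`.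
lemma one_sub_mul_exp_neg_le {k x : ℝ} (hk : k ≤ 1) (hx : 0 ≤ x) :
    1 - k * exp (-x) ≤ 1 - k + x := by
  have h_exp_le : exp (-x) ≤ 1 := exp_le_one_iff.2 (neg_nonpos.2 hx)
  have h_exp_ge : 1 - x ≤ exp (-x) := by linarith [add_one_le_exp (-x)]
  nlinarith [exp_pos (-x)]

lemma mul_exp_neg_le_exp_neg_half {c : ℝ} (hc : 0 < c) (s : ℝ) :
    s * exp (-c * s) ≤ 2 / c * exp (-(c / 2) * s) := by
  have h_split :
      s * exp (-c * s) = 2 / c * (c / 2 * s * exp (-(c / 2 * s))) * exp (-(c / 2) * s) := by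
    rw [show -c * s = -(c / 2 * s) + -(c / 2) * s by ring, exp_add]
    field_simp
  have h_le_one : c / 2 * s * exp (-(c / 2 * s)) ≤ 1 :=
    (mul_exp_neg_le_exp_neg_one _).trans (exp_le_one_iff.2 (by norm_num))
  calc s * exp (-c * s) ≤ 2 / c * 1 * exp (-(c / 2) * s) := by rw [h_split]; gcongr
    _ = 2 / c * exp (-(c / 2) * s) := by rw [mul_one]

lemma integral_Ioi_le_of_le_mul_exp_neg {g : ℝ → ℝ} {A b τ : ℝ} (hb : 0 < b)
    (hg : IntegrableOn g (Ioi τ)) (hle : ∀ s, τ < s → g s ≤ A * exp (-b * s)) :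
    ∫ s in Ioi τ, g s ≤ A / b * exp (-b * τ) := by
  calc ∫ s in Ioi τ, g s ≤ ∫ s in Ioi τ, A * exp (-b * s) :=
        setIntegral_mono_on hg ((exp_neg_integrableOn_Ioi τ hb).const_mul A)
          measurableSet_Ioi hle
    _ = A / b * exp (-b * τ) := by
        rw [MeasureTheory.integral_const_mul, integral_exp_mul_Ioi (neg_neg_iff_pos.2 hb)]
        field_simp

lemma intervalIntegral_le_integral_Ioi {g : ℝ → ℝ} {τ t : ℝ} (hτt : τ ≤ t)
    (hg : IntegrableOn g (Ioi τ)) (hg0 : ∀ s, τ < s → 0 ≤ g s) :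
    ∫ s in τ..t, g s ≤ ∫ s in Ioi τ, g s := by
  rw [integral_of_le hτt]
  exact setIntegral_mono_set hg ((ae_restrict_iff' measurableSet_Ioi).2 (.of_forall hg0))
    Ioc_subset_Ioi_self.eventuallyLE

theorem tendsto_intervalIntegral_of_dominated_Ioi {E : Type*} [NormedAddCommGroup E]
    [NormedSpace ℝ E] [CompleteSpace E] {a : ℝ} {F : ℝ → ℝ → E} {f : ℝ → E}
    (bound : ℝ → ℝ)
    (hF_int : ∀ t, a ≤ t → IntegrableOn (F t) (Ioc a t))
    (h_bound : ∀ t τ, a < τ → τ ≤ t → ‖F t τ‖ ≤ bound τ)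
    (bound_integrable : IntegrableOn bound (Ioi a))
    (h_lim : ∀ τ, a < τ → Tendsto (fun t ↦ F t τ) atTop (𝓝 (f τ))) :
    Tendsto (fun t ↦ ∫ τ in a..t, F t τ) atTop (𝓝 (∫ τ in Ioi a, f τ)) := by
  have h_ind : Tendsto (fun t ↦ ∫ τ in Ioi a, (Ioc a t).indicator (F t) τ) atTop
      (𝓝 (∫ τ in Ioi a, f τ)) := by
    refine tendsto_integral_filter_of_dominated_convergence bound ?_ ?_ bound_integrable ?_
    · filter_upwards [eventually_ge_atTop a] with t ht
      exact ((hF_int t ht).integrable_indicator measurableSet_Ioc).aestronglyMeasurable.restrict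
    · refine .of_forall fun t ↦
        (ae_restrict_iff' measurableSet_Ioi).2 (.of_forall fun τ hτ ↦ ?_)
      by_cases h : τ ∈ Ioc a t
      · rw [indicator_of_mem h]
        exact h_bound t τ h.1 h.2
      · rw [indicator_of_notMem h, norm_zero]
        exact (norm_nonneg _).trans (h_bound τ τ hτ le_rfl)
    · refine (ae_restrict_iff' measurableSet_Ioi).2 (.of_forall fun τ hτ ↦ ?_)
      refine (h_lim τ hτ).congr' ?_
      filter_upwards [eventually_ge_atTop τ] with t ht
      rw [indicator_of_mem (show τ ∈ Ioc a t from ⟨hτ, ht⟩)]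
  refine h_ind.congr' ?_
  filter_upwards [eventually_ge_atTop a] with t ht
  rw [integral_of_le ht, setIntegral_indicator measurableSet_Ioc,
    inter_eq_right.2 Ioc_subset_Ioi_self]

theorem tendsto_integral_one_sub_mul_exp_neg_integral {K g bound : ℝ → ℝ} {a : ℝ}
    (hK : ContinuousOn K (Ici a)) (hg : ContinuousOn g (Ici a))
    (hK_le : ∀ τ, a < τ → K τ ≤ 1) (hg_nonneg : ∀ s, a < s → 0 ≤ g s)
    (hg_int : IntegrableOn g (Ioi a))
    (h_bound : ∀ τ, a < τ → 1 - K τ + ∫ s in Ioi τ, g s ≤ bound τ)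
    (bound_integrable : IntegrableOn bound (Ioi a)) :
    Tendsto (fun t ↦ ∫ τ in a..t, (1 - K τ * exp (-∫ s in τ..t, g s))) atTop
      (𝓝 (∫ τ in Ioi a, (1 - K τ * exp (-∫ s in Ioi τ, g s)))) := by
  refine tendsto_intervalIntegral_of_dominated_Ioi bound (fun t hat ↦ ?_)
    (fun t τ haτ hτt ↦ ?_) bound_integrable (fun τ haτ ↦ ?_)
  · have hg_Icc : IntegrableOn g (uIcc a t) :=
      (hg.mono (uIcc_of_le hat ▸ Icc_subset_Ici_self)).integrableOn_compact isCompact_uIcc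
    have h_cont : ContinuousOn (fun τ ↦ 1 - K τ * exp (-∫ s in τ..t, g s)) (Icc a t) := by
      rw [← uIcc_of_le hat]
      exact continuousOn_const.sub ((hK.mono (uIcc_of_le hat ▸ Icc_subset_Ici_self)).mul
        (continuousOn_primitive_interval_left hg_Icc).neg.rexp)
    exact h_cont.integrableOn_Icc.mono_set Ioc_subset_Icc_self
  · have hI_nonneg : 0 ≤ ∫ s in τ..t, g s :=
      integral_nonneg hτt fun s hs ↦ hg_nonneg s (haτ.trans_le hs.1)
    rw [norm_of_nonneg (one_sub_mul_exp_neg_nonneg (hK_le τ haτ) hI_nonneg)]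
    calc _ ≤ 1 - K τ + ∫ s in τ..t, g s := one_sub_mul_exp_neg_le (hK_le τ haτ) hI_nonneg
      _ ≤ 1 - K τ + ∫ s in Ioi τ, g s := by
        gcongr
        exact intervalIntegral_le_integral_Ioi hτt (hg_int.mono_set (Ioi_subset_Ioi haτ.le))
          fun s hs ↦ hg_nonneg s (haτ.trans hs)
      _ ≤ bound τ := h_bound τ haτ
  · exact tendsto_const_nhds.sub (tendsto_const_nhds.mul (intervalIntegral_tendsto_integral_Ioi
      τ (hg_int.mono_set (Ioi_subset_Ioi haτ.le)) tendsto_id).neg.rexp)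

/-- under exponential decay hypotheses, the asphericity mass
`m(t)` converges to a finite nonnegative limit as `t → ∞`. -/
theorem asphericity_mass_converges
    (K g : ℝ → ℝ)
    (hKcont : ContinuousOn K (Set.Ici 1))
    (hgcont : ContinuousOn g (Set.Ici 1))
    (c C : ℝ) (hc : 0 < c) (hC : 0 < C)
    (hKlow : ∀ τ : ℝ, 1 ≤ τ → 1 - C * Real.exp (-c * τ) ≤ K τ)
    (hKup : ∀ τ : ℝ, 1 ≤ τ → K τ ≤ 1)
    (hg0 : ∀ s : ℝ, 1 ≤ s → 0 ≤ g s)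
    (hgup : ∀ s : ℝ, 1 ≤ s → g s ≤ C * s * Real.exp (-c * s)) :
    ∃ L : ℝ, 0 ≤ L ∧
      Tendsto (fun t : ℝ =>
        (1 / 2) * ∫ τ in (1:ℝ)..t,
          (1 - K τ * Real.exp (-∫ s in τ..t, g s))) atTop (nhds L) := by
  have hg_exp : ∀ s, 1 ≤ s → g s ≤ 2 * C / c * exp (-(c / 2) * s) := fun s hs ↦ calc
    g s ≤ C * (s * exp (-c * s)) := by rw [← mul_assoc]; exact hgup s hs
    _ ≤ C * (2 / c * exp (-(c / 2) * s)) :=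
      mul_le_mul_of_nonneg_left (mul_exp_neg_le_exp_neg_half hc s) hC.le
    _ = 2 * C / c * exp (-(c / 2) * s) := by ring
  have hg_int : ∀ τ, 1 ≤ τ → IntegrableOn g (Ioi τ) := fun τ hτ ↦
    ((exp_neg_integrableOn_Ioi τ (half_pos hc)).const_mul (2 * C / c)).mono'
      ((hgcont.mono (Ioi_subset_Ici hτ)).aestronglyMeasurable measurableSet_Ioi)
      ((ae_restrict_iff' measurableSet_Ioi).2 (.of_forall fun s hs ↦ by
        rw [norm_of_nonneg (hg0 s (hτ.trans hs.le))]
        exact hg_exp s (hτ.trans hs.le)))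
  have h_lim := tendsto_integral_one_sub_mul_exp_neg_integral hKcont hgcont
    (fun τ hτ ↦ hKup τ hτ.le) (fun s hs ↦ hg0 s hs.le) (hg_int 1 le_rfl)
    (bound := fun τ ↦ C * exp (-c * τ) + 2 * C / c / (c / 2) * exp (-(c / 2) * τ))
    (fun τ hτ ↦ add_le_add (by linarith [hKlow τ hτ.le])
      (integral_Ioi_le_of_le_mul_exp_neg (half_pos hc) (hg_int τ hτ.le)
        fun s hs ↦ hg_exp s (hτ.trans hs).le))
    (((exp_neg_integrableOn_Ioi 1 hc).const_mul C).add
      ((exp_neg_integrableOn_Ioi 1 (half_pos hc)).const_mul _))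
  refine ⟨_, mul_nonneg (by norm_num) (setIntegral_nonneg measurableSet_Ioi fun τ hτ ↦ ?_),
    h_lim.const_mul (1 / 2)⟩
  exact one_sub_mul_exp_neg_nonneg (hKup τ (le_of_lt hτ))
    (setIntegral_nonneg measurableSet_Ioi fun s hs ↦ hg0 s (le_of_lt (lt_trans hτ hs)))
end

section
/- Let K : ℝ → ℝ and g : ℝ → ℝ be continuous on [1,∞) with K(τ) ≤ 1 and g(τ) ≥ 0 for all τ ≥ 1. Then ∫₁ᵗ (1 − K(τ)·exp(−∫_τ^t g(s) ds)) dτ = 0 for every t ≥ 1 if and only if K(τ) = 1 for all τ ≥ 1 and g(s) = 0 for all s ≥ 1. -/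
open MeasureTheory intervalIntegral Real

/-- A nonnegative continuous function on `[a,b]` with zero integral vanishes. -/
lemma eq_zero_of_integral_eq_zero {a b : ℝ} (hab : a < b) {f : ℝ → ℝ}
    (hf : ContinuousOn f (Set.Icc a b)) (h0 : ∀ x ∈ Set.Icc a b, 0 ≤ f x)
    (hint : ∫ x in a..b, f x = 0) : ∀ x ∈ Set.Icc a b, f x = 0 := by
  intro x hx
  by_contra hne
  have hpos : 0 < f x := lt_of_le_of_ne (h0 x hx) (Ne.symm hne)
  have := intervalIntegral.integral_pos hab hf
    (fun y hy => h0 y ⟨le_of_lt hy.1, hy.2⟩) ⟨x, hx, hpos⟩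
  rw [hint] at this
  exact lt_irrefl 0 this

/-- the asphericity mass vanishes for all `t ≥ 1` iff `K ≡ 1`
and `g ≡ 0` on `[1,∞)`. -/
theorem asphericity_mass_eq_zero_iff
    (K g : ℝ → ℝ)
    (hKcont : ContinuousOn K (Set.Ici 1))
    (hgcont : ContinuousOn g (Set.Ici 1))
    (hK : ∀ τ : ℝ, 1 ≤ τ → K τ ≤ 1)
    (hg : ∀ τ : ℝ, 1 ≤ τ → 0 ≤ g τ) :
    (∀ t : ℝ, 1 ≤ t →
      (∫ τ in (1:ℝ)..t, (1 - K τ * Real.exp (-∫ s in τ..t, g s))) = 0)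
    ↔ ((∀ τ : ℝ, 1 ≤ τ → K τ = 1) ∧ (∀ s : ℝ, 1 ≤ s → g s = 0)) := by
  constructor
  · intro h
    -- key step: for all 1 ≤ τ ≤ t with 1 < t, K τ = 1 and ∫_τ^t g = 0
    have key : ∀ t : ℝ, 1 < t → ∀ τ ∈ Set.Icc (1:ℝ) t,
        K τ = 1 ∧ (∫ s in τ..t, g s) = 0 := by
      intro t ht τ hτ
      have ht1 : (1:ℝ) ≤ t := le_of_lt ht
      have huIcc : Set.uIcc (1:ℝ) t = Set.Icc 1 t := Set.uIcc_of_le ht1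
      have hsub : Set.Icc (1:ℝ) t ⊆ Set.Ici 1 := fun y hy => hy.1
      have hgI : IntegrableOn g (Set.uIcc (1:ℝ) t) := by
        rw [huIcc]
        exact (hgcont.mono hsub).integrableOn_compact isCompact_Icc
      -- continuity of the integrand
      have hprim : ContinuousOn (fun τ => ∫ s in τ..t, g s) (Set.Icc (1:ℝ) t) := by
        have := intervalIntegral.continuousOn_primitive_interval_left hgI
        rwa [huIcc] at this
      have hcont : ContinuousOn
          (fun τ => 1 - K τ * Real.exp (-∫ s in τ..t, g s)) (Set.Icc (1:ℝ) t) :=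
        continuousOn_const.sub ((hKcont.mono hsub).mul
          ((Real.continuous_exp.comp_continuousOn hprim.neg)))
      -- nonnegativity of the integrand
      have hnonneg : ∀ τ ∈ Set.Icc (1:ℝ) t,
          0 ≤ 1 - K τ * Real.exp (-∫ s in τ..t, g s) := by
        intro τ hτ
        have hInonneg : 0 ≤ ∫ s in τ..t, g s :=
          intervalIntegral.integral_nonneg hτ.2 (fun u hu => hg u (le_trans hτ.1 hu.1))
        have hexp : Real.exp (-∫ s in τ..t, g s) ≤ 1 := by
          rw [Real.exp_le_one_iff]
          linarith
        have hexp0 : 0 < Real.exp (-∫ s in τ..t, g s) := Real.exp_pos _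
        nlinarith [hK τ hτ.1]
      have hzero := eq_zero_of_integral_eq_zero ht hcont hnonneg (h t ht1) τ hτ
      -- so K τ * exp(-I) = 1
      have heq : K τ * Real.exp (-∫ s in τ..t, g s) = 1 := by linarith
      have hInonneg : 0 ≤ ∫ s in τ..t, g s :=
        intervalIntegral.integral_nonneg hτ.2 (fun u hu => hg u (le_trans hτ.1 hu.1))
      have hexp : Real.exp (-∫ s in τ..t, g s) ≤ 1 := by
        rw [Real.exp_le_one_iff]; linarith
      have hexp0 : 0 < Real.exp (-∫ s in τ..t, g s) := Real.exp_pos _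
      have hK1 : K τ = 1 := by nlinarith [hK τ hτ.1]
      refine ⟨hK1, ?_⟩
      rw [hK1, one_mul] at heq
      have h0' : (-(∫ s in τ..t, g s)) = 0 := by
        have := Real.exp_injective (by rw [heq, Real.exp_zero] : Real.exp (-∫ s in τ..t, g s) = Real.exp 0)
        exact this
      linarith
    constructor
    · intro τ hτ
      exact (key (τ + 1) (by linarith) τ ⟨hτ, by linarith⟩).1
    · intro s hs
      -- ∫_1^{s+1} g = 0, g ≥ 0 continuous ⇒ g = 0 on [1, s+1]
      have hint : (∫ u in (1:ℝ)..(s+1), g u) = 0 :=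
        (key (s + 1) (by linarith) 1 ⟨le_refl 1, by linarith⟩).2
      have hsub : Set.Icc (1:ℝ) (s+1) ⊆ Set.Ici 1 := fun y hy => hy.1
      exact eq_zero_of_integral_eq_zero (by linarith) (hgcont.mono hsub)
        (fun x hx => hg x hx.1) hint s ⟨hs, by linarith⟩
  · rintro ⟨hK1, hg0⟩ t ht
    have huIcc : Set.uIcc (1:ℝ) t = Set.Icc 1 t := Set.uIcc_of_le ht
    have : Set.EqOn (fun τ => 1 - K τ * Real.exp (-∫ s in τ..t, g s))
        (fun _ => (0:ℝ)) (Set.uIcc 1 t) := by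
      intro τ hτ
      rw [huIcc] at hτ
      have hginner : (∫ s in τ..t, g s) = 0 := by
        have : Set.EqOn g (fun _ => (0:ℝ)) (Set.uIcc τ t) := by
          intro u hu
          rw [Set.uIcc_of_le hτ.2] at hu
          exact hg0 u (le_trans hτ.1 hu.1)
        rw [intervalIntegral.integral_congr this]
        simp
      simp [hginner, hK1 τ hτ.1]
    rw [intervalIntegral.integral_congr this]
    simp
end

section
/- Let f, g : ℝ → ℝ be continuous on [1,∞) with f(τ) ≥ 0 and g(τ) ≥ 0 for all τ ≥ 1, and suppose ∫₁^∞ τ²·f(τ) dτ < ∞. Then there exists a finite real number L with 0 ≤ L ≤ (1/4)∫₁^∞ τ²·f(τ) dτ such that e(t) := (1/2)∫₁ᵗ (τ²/2)·f(τ)·exp(−∫_τ^t g(s) ds) dτ converges to L as t → ∞. -/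
open MeasureTheory intervalIntegral Real Filter

/-- existence of a finite limit of the error term `e(t)` under
the asymptotic flatness condition `∫₁^∞ τ²·f(τ) dτ < ∞`. -/
theorem error_term_converges
    (f g : ℝ → ℝ)
    (hfcont : ContinuousOn f (Set.Ici 1))
    (hgcont : ContinuousOn g (Set.Ici 1))
    (hf : ∀ τ : ℝ, 1 ≤ τ → 0 ≤ f τ)
    (hg : ∀ τ : ℝ, 1 ≤ τ → 0 ≤ g τ)
    (hfint : IntegrableOn (fun τ : ℝ => τ ^ 2 * f τ) (Set.Ici 1)) :
    ∃ L : ℝ, 0 ≤ L ∧ L ≤ (1 / 4) * (∫ τ in Set.Ioi (1:ℝ), τ ^ 2 * f τ) ∧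
      Tendsto (fun t : ℝ =>
        (1 / 2) * ∫ τ in (1:ℝ)..t,
          (τ ^ 2 / 2) * f τ * Real.exp (-∫ s in τ..t, g s)) atTop (nhds L) := by
  set G : ℝ → ℝ := fun x => ∫ s in (1:ℝ)..x, g s with hGdef
  have hgI : ∀ a b : ℝ, 1 ≤ a → 1 ≤ b → IntervalIntegrable g volume a b := by
    intro a b ha hb
    exact (hgcont.mono (fun x hx => le_trans (le_min ha hb) hx.1)).intervalIntegrable
  -- splitting of the integral of g
  have hsplit : ∀ τ t : ℝ, 1 ≤ τ → 1 ≤ t → (∫ s in τ..t, g s) = G t - G τ := by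
    intro τ t hτ ht
    have := integral_add_adjacent_intervals (hgI 1 τ le_rfl hτ) (hgI τ t hτ ht)
    simp only [hGdef]
    linarith [this]
  -- monotonicity of G on [1, ∞)
  have hGmono : ∀ a b : ℝ, 1 ≤ a → a ≤ b → G a ≤ G b := by
    intro a b ha hab
    have hb : (1:ℝ) ≤ b := le_trans ha hab
    have h1 := integral_add_adjacent_intervals (hgI 1 a le_rfl ha) (hgI a b ha hb)
    have h2 : 0 ≤ ∫ s in a..b, g s := by
      apply intervalIntegral.integral_nonneg hab
      intro u hu
      exact hg u (le_trans ha hu.1)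
    simp only [hGdef]
    linarith [h1]
  -- continuity of G on [1, ∞)
  have hGcont : ContinuousOn G (Set.Ici 1) := by
    intro x hx
    have hx1 : (1:ℝ) ≤ x := hx
    have hsub : Set.uIcc (1:ℝ) (x+1) ⊆ Set.Ici 1 := by
      rw [Set.uIcc_of_le (by linarith)]; exact fun y hy => hy.1
    have hc : ContinuousOn G (Set.uIcc 1 (x+1)) :=
      intervalIntegral.continuousOn_primitive_interval
        ((hgcont.mono hsub).integrableOn_compact isCompact_uIcc)
    have hmem : x ∈ Set.uIcc 1 (x+1) := by
      rw [Set.uIcc_of_le (by linarith)]; exact ⟨hx1, by linarith⟩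
    have hcw : ContinuousWithinAt G (Set.uIcc 1 (x+1)) x := hc x hmem
    apply hcw.mono_of_mem_nhdsWithin
    have : Set.Ici (1:ℝ) ∩ Set.Iio (x+1) ⊆ Set.uIcc 1 (x+1) := by
      rw [Set.uIcc_of_le (by linarith)]
      exact fun y hy => ⟨hy.1, le_of_lt hy.2⟩
    exact Filter.mem_of_superset
      (inter_mem self_mem_nhdsWithin
        (mem_nhdsWithin_of_mem_nhds (Iio_mem_nhds (by linarith)))) this
  -- the decreasing exponential factor
  set ψ : ℝ → ℝ := fun t => Real.exp (-(G (max 1 t))) with hψdef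
  have hψanti : Antitone ψ := by
    intro a b hab
    exact Real.exp_le_exp.mpr (neg_le_neg (hGmono _ _ (le_max_left 1 a)
      (max_le_max le_rfl hab)))
  have hψbdd : BddBelow (Set.range ψ) :=
    ⟨0, by rintro y ⟨t, rfl⟩; exact (Real.exp_pos _).le⟩
  set A : ℝ := ⨅ t : ℝ, ψ t with hAdef
  have hψtend : Tendsto ψ atTop (nhds A) := tendsto_atTop_ciInf hψanti hψbdd
  have hA0 : 0 ≤ A := le_ciInf (fun t => (Real.exp_pos _).le)
  have hAle : ∀ τ : ℝ, 1 ≤ τ → A * Real.exp (G τ) ≤ 1 := by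
    intro τ hτ
    have h1 : A ≤ ψ τ := ciInf_le hψbdd τ
    have h2 : ψ τ = Real.exp (-(G τ)) := by rw [hψdef]; simp [max_eq_right hτ]
    calc A * Real.exp (G τ) ≤ Real.exp (-(G τ)) * Real.exp (G τ) := by
          apply mul_le_mul_of_nonneg_right (h2 ▸ h1) (Real.exp_pos _).le
      _ = 1 := by rw [← Real.exp_add]; simp
  -- the family of functions and the limit function
  set F : ℝ → ℝ → ℝ := fun t τ =>
    (Set.Ioc (1:ℝ) t).indicator (fun τ => τ^2/2 * f τ * (Real.exp (G τ) * ψ t)) τ with hFdef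
  set Φ : ℝ → ℝ := fun τ => τ^2/2 * f τ * (Real.exp (G τ) * A) with hΦdef
  set bound : ℝ → ℝ := fun τ => τ^2/2 * f τ with hbdef
  have hbint : IntegrableOn bound (Set.Ioi 1) := by
    have : IntegrableOn (fun τ : ℝ => τ ^ 2 * f τ) (Set.Ioi 1) :=
      hfint.mono_set Set.Ioi_subset_Ici_self
    have h : IntegrableOn (fun τ : ℝ => (1/2) * (τ ^ 2 * f τ)) (Set.Ioi 1) :=
      this.const_mul _
    apply MeasureTheory.IntegrableOn.congr_fun h ?_ measurableSet_Ioi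
    intro x _; simp only [hbdef]; ring
  have hbnonneg : ∀ τ : ℝ, 1 ≤ τ → 0 ≤ bound τ := by
    intro τ hτ
    exact mul_nonneg (by positivity) (hf τ hτ)
  -- DCT
  have hDCT : Tendsto (fun t => ∫ τ in Set.Ioi (1:ℝ), F t τ) atTop
      (nhds (∫ τ in Set.Ioi (1:ℝ), Φ τ)) := by
    apply MeasureTheory.tendsto_integral_filter_of_dominated_convergence bound
    · -- measurability
      filter_upwards [eventually_ge_atTop (1:ℝ)] with t ht
      apply AEStronglyMeasurable.indicator ?_ measurableSet_Ioc
      have hcon : ContinuousOn (fun τ => τ^2/2 * f τ * (Real.exp (G τ) * ψ t)) (Set.Ici 1) := by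
        apply ContinuousOn.mul
        · exact (continuousOn_pow 2 |>.div_const 2).mul hfcont
        · exact ((Real.continuous_exp.comp_continuousOn hGcont).mul continuousOn_const)
      exact (hcon.aestronglyMeasurable measurableSet_Ici).mono_measure
        (Measure.restrict_mono Set.Ioi_subset_Ici_self le_rfl)
    · -- bound
      filter_upwards [eventually_ge_atTop (1:ℝ)] with t ht
      rw [ae_restrict_iff' measurableSet_Ioi]
      filter_upwards with τ hτ
      have hτ1 : (1:ℝ) ≤ τ := le_of_lt hτ
      by_cases hmem : τ ∈ Set.Ioc (1:ℝ) t
      · rw [hFdef]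
        simp only [Set.indicator_of_mem hmem]
        rw [Real.norm_eq_abs, abs_of_nonneg]
        · have hle : Real.exp (G τ) * ψ t ≤ 1 := by
            have : ψ t = Real.exp (-(G t)) := by rw [hψdef]; simp [max_eq_right ht]
            rw [this, ← Real.exp_add]
            apply Real.exp_le_one_iff.mpr
            have := hGmono τ t hτ1 hmem.2
            linarith
          calc τ^2/2 * f τ * (Real.exp (G τ) * ψ t) ≤ τ^2/2 * f τ * 1 := by
                apply mul_le_mul_of_nonneg_left hle (hbnonneg τ hτ1)
            _ = bound τ := by rw [hbdef]; ring
        · exact mul_nonneg (hbnonneg τ hτ1)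
            (mul_nonneg (Real.exp_pos _).le (Real.exp_pos _).le)
      · rw [hFdef]
        simp only [Set.indicator_of_notMem hmem]
        simpa using hbnonneg τ hτ1
    · exact hbint
    · -- pointwise limit
      rw [ae_restrict_iff' measurableSet_Ioi]
      filter_upwards with τ
      intro hτ1
      have h1 : (1:ℝ) < τ := hτ1
      have : Tendsto (fun t => τ^2/2 * f τ * (Real.exp (G τ) * ψ t)) atTop (nhds (Φ τ)) := by
        rw [hΦdef]
        exact (hψtend.const_mul _).const_mul _
      apply this.congr'
      filter_upwards [eventually_ge_atTop τ] with t ht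
      rw [hFdef]
      simp only [Set.indicator_of_mem (Set.mem_Ioc.mpr ⟨h1, ht⟩)]
  -- identify the error term with the F-integral
  have hEq : ∀ᶠ t in atTop, (1/2 : ℝ) * ∫ τ in Set.Ioi (1:ℝ), F t τ =
      (1 / 2) * ∫ τ in (1:ℝ)..t, (τ ^ 2 / 2) * f τ * Real.exp (-∫ s in τ..t, g s) := by
    filter_upwards [eventually_ge_atTop (1:ℝ)] with t ht
    congr 1
    rw [intervalIntegral.integral_of_le ht]
    rw [hFdef]
    rw [MeasureTheory.integral_indicator measurableSet_Ioc,
      Measure.restrict_restrict measurableSet_Ioc]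
    rw [Set.Ioc_inter_Ioi]
    have : max (1:ℝ) 1 = 1 := max_self 1
    rw [this]
    apply MeasureTheory.setIntegral_congr_fun measurableSet_Ioc
    intro τ hτ
    have hτ1 : (1:ℝ) ≤ τ := le_of_lt hτ.1
    have hψt : ψ t = Real.exp (-(G t)) := by rw [hψdef]; simp [max_eq_right ht]
    show τ^2/2 * f τ * (Real.exp (G τ) * ψ t) = τ^2/2 * f τ * Real.exp (-∫ s in τ..t, g s)
    rw [hψt, ← Real.exp_add, hsplit τ t hτ1 ht]
    ring_nf
  refine ⟨(1/2) * ∫ τ in Set.Ioi (1:ℝ), Φ τ, ?_, ?_, ?_⟩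
  · apply mul_nonneg (by norm_num)
    apply MeasureTheory.setIntegral_nonneg measurableSet_Ioi
    intro τ hτ
    exact mul_nonneg (hbnonneg τ (le_of_lt hτ))
      (mul_nonneg (Real.exp_pos _).le hA0)
  · have hmono : (∫ τ in Set.Ioi (1:ℝ), Φ τ) ≤ ∫ τ in Set.Ioi (1:ℝ), bound τ := by
      apply MeasureTheory.integral_mono_of_nonneg
      · rw [EventuallyLE, ae_restrict_iff' measurableSet_Ioi]
        filter_upwards with τ
        intro hτ
        simpa using mul_nonneg (hbnonneg τ (le_of_lt hτ))
          (mul_nonneg (Real.exp_pos _).le hA0)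
      · exact hbint
      · rw [EventuallyLE, ae_restrict_iff' measurableSet_Ioi]
        filter_upwards with τ
        intro hτ1
        have h1 : (1:ℝ) ≤ τ := le_of_lt hτ1
        calc Φ τ = τ^2/2 * f τ * (A * Real.exp (G τ)) := by rw [hΦdef]; ring
          _ ≤ τ^2/2 * f τ * 1 :=
            mul_le_mul_of_nonneg_left (hAle τ h1) (hbnonneg τ h1)
          _ = bound τ := by rw [hbdef]; ring
    have hbeq : (∫ τ in Set.Ioi (1:ℝ), bound τ) =
        (1/2) * ∫ τ in Set.Ioi (1:ℝ), τ ^ 2 * f τ := by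
      rw [← MeasureTheory.integral_const_mul]
      apply MeasureTheory.setIntegral_congr_fun measurableSet_Ioi
      intro τ _; rw [hbdef]; ring
    calc (1/2 : ℝ) * ∫ τ in Set.Ioi (1:ℝ), Φ τ
        ≤ (1/2) * ∫ τ in Set.Ioi (1:ℝ), bound τ := by linarith
      _ = (1/4) * ∫ τ in Set.Ioi (1:ℝ), τ ^ 2 * f τ := by rw [hbeq]; ring
  · exact (hDCT.const_mul (1/2 : ℝ)).congr' hEq
end

section
/- Let f, g : ℝ → ℝ be continuous on [1,∞) with f(τ) ≥ 0 and g(τ) ≥ 0 for all τ ≥ 1, and suppose ∫₁^∞ τ²·f(τ) dτ < ∞ and ∫₁^∞ g(s) ds < ∞. Then e(t) := (1/2)∫₁ᵗ (τ²/2)·f(τ)·exp(−∫_τ^t g(s) ds) dτ tends to 0 as t → ∞ if and only if f(τ) = 0 for all τ ≥ 1. -/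
open MeasureTheory intervalIntegral Real Filter

/-- the error term tends to `0` iff `f` vanishes identically on
`[1,∞)`. -/
theorem error_term_zero_iff
    (f g : ℝ → ℝ)
    (hfcont : ContinuousOn f (Set.Ici 1))
    (hgcont : ContinuousOn g (Set.Ici 1))
    (hf : ∀ τ : ℝ, 1 ≤ τ → 0 ≤ f τ)
    (hg : ∀ τ : ℝ, 1 ≤ τ → 0 ≤ g τ)
    (hfint : IntegrableOn (fun τ : ℝ => τ ^ 2 * f τ) (Set.Ici 1))
    (hgint : IntegrableOn g (Set.Ici 1)) :
    Tendsto (fun t : ℝ =>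
      (1 / 2) * ∫ τ in (1:ℝ)..t,
        (τ ^ 2 / 2) * f τ * Real.exp (-∫ s in τ..t, g s)) atTop (nhds 0)
    ↔ ∀ τ : ℝ, 1 ≤ τ → f τ = 0 := by
  -- the "weight" function
  set φ : ℝ → ℝ := fun τ => τ ^ 2 / 2 * f τ with hφdef
  have huIcc : ∀ a b : ℝ, 1 ≤ a → 1 ≤ b → Set.uIcc a b ⊆ Set.Ici 1 := by
    intro a b ha hb x hx
    exact le_trans (le_inf ha hb) hx.1
  have hφcont : ContinuousOn φ (Set.Ici 1) :=
    (((continuous_pow 2).continuousOn).div_const 2).mul hfcont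
  have hφii : ∀ a b : ℝ, 1 ≤ a → 1 ≤ b → IntervalIntegrable φ volume a b := by
    intro a b ha hb
    exact (hφcont.mono (huIcc a b ha hb)).intervalIntegrable
  have hgii : ∀ a b : ℝ, 1 ≤ a → 1 ≤ b → IntervalIntegrable g volume a b := by
    intro a b ha hb
    exact (hgint.mono_set (huIcc a b ha hb)).intervalIntegrable
  constructor
  · intro htend
    set C : ℝ := ∫ s in Set.Ici 1, g s with hCdef
    have hgae : 0 ≤ᵐ[volume.restrict (Set.Ici 1)] g :=
      (ae_restrict_iff' measurableSet_Ici).2 (ae_of_all _ hg)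
    -- the inner integral is bounded by C
    have hbound : ∀ t τ : ℝ, 1 ≤ τ → τ ≤ t → (∫ s in τ..t, g s) ≤ C := by
      intro t τ hτ hτt
      rw [intervalIntegral.integral_of_le hτt]
      refine setIntegral_mono_set hgint hgae ?_
      have hsub : Set.Ioc τ t ⊆ Set.Ici 1 := fun x hx => le_trans hτ hx.1.le
      exact hsub.eventuallyLE
    -- continuity (hence integrability) of the full integrand
    have hcontint : ∀ t : ℝ, 1 ≤ t →
        IntervalIntegrable (fun τ => φ τ * Real.exp (-∫ s in τ..t, g s)) volume 1 t := by
      intro t ht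
      apply ContinuousOn.intervalIntegrable
      have h1 : ContinuousOn (fun τ : ℝ => ∫ s in (1:ℝ)..τ, g s) (Set.uIcc 1 t) :=
        intervalIntegral.continuousOn_primitive_interval
          (hgint.mono_set (huIcc 1 t le_rfl ht))
      have h2 : ContinuousOn (fun τ : ℝ => ∫ s in τ..t, g s) (Set.uIcc 1 t) := by
        have := (continuousOn_const (c := ∫ s in (1:ℝ)..t, g s)).sub h1
        refine this.congr ?_
        intro τ hτ
        rw [Set.uIcc_of_le ht] at hτ
        exact (intervalIntegral.integral_interval_sub_left (hgii 1 t le_rfl ht)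
          (hgii 1 τ le_rfl hτ.1)).symm
      exact (hφcont.mono (huIcc 1 t le_rfl ht)).mul
        ((Real.continuous_exp.comp_continuousOn h2.neg))
    -- key lower bound
    have key : ∀ t : ℝ, 1 ≤ t →
        Real.exp (-C) / 2 * ∫ τ in (1:ℝ)..t, φ τ ≤
          (1 / 2) * ∫ τ in (1:ℝ)..t, φ τ * Real.exp (-∫ s in τ..t, g s) := by
      intro t ht
      have hmono : (∫ τ in (1:ℝ)..t, Real.exp (-C) * φ τ) ≤
          ∫ τ in (1:ℝ)..t, φ τ * Real.exp (-∫ s in τ..t, g s) := by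
        refine intervalIntegral.integral_mono_on ht
          ((hφii 1 t le_rfl ht).const_mul _) (hcontint t ht) ?_
        intro τ hτ
        have hφnn : 0 ≤ φ τ := mul_nonneg (by positivity) (hf τ hτ.1)
        have hexple : Real.exp (-C) ≤ Real.exp (-∫ s in τ..t, g s) :=
          Real.exp_le_exp.2 (neg_le_neg (hbound t τ hτ.1 hτ.2))
        calc Real.exp (-C) * φ τ ≤ Real.exp (-∫ s in τ..t, g s) * φ τ :=
              mul_le_mul_of_nonneg_right hexple hφnn
          _ = φ τ * Real.exp (-∫ s in τ..t, g s) := mul_comm _ _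
      have heq : (∫ τ in (1:ℝ)..t, Real.exp (-C) * φ τ) =
          Real.exp (-C) * ∫ τ in (1:ℝ)..t, φ τ :=
        intervalIntegral.integral_const_mul _ _
      rw [div_mul_eq_mul_div, ← heq]
      linarith
    -- from tendsto, each partial integral vanishes
    have hI0 : ∀ t₀ : ℝ, 1 ≤ t₀ → (∫ τ in (1:ℝ)..t₀, φ τ) = 0 := by
      intro t₀ ht₀
      have hnn : 0 ≤ ∫ τ in (1:ℝ)..t₀, φ τ :=
        intervalIntegral.integral_nonneg ht₀
          (fun u hu => mul_nonneg (by positivity) (hf u hu.1))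
      have hle : Real.exp (-C) / 2 * ∫ τ in (1:ℝ)..t₀, φ τ ≤ 0 := by
        refine ge_of_tendsto htend ?_
        filter_upwards [eventually_ge_atTop t₀] with t ht
        have h1t : (1:ℝ) ≤ t := le_trans ht₀ ht
        have hmonoI : (∫ τ in (1:ℝ)..t₀, φ τ) ≤ ∫ τ in (1:ℝ)..t, φ τ := by
          have hadd := intervalIntegral.integral_add_adjacent_intervals
            (hφii 1 t₀ le_rfl ht₀) (hφii t₀ t ht₀ (le_trans ht₀ ht))
          have htail : 0 ≤ ∫ τ in t₀..t, φ τ :=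
            intervalIntegral.integral_nonneg ht
              (fun u hu => mul_nonneg (by positivity) (hf u (le_trans ht₀ hu.1)))
          linarith [hadd]
        calc Real.exp (-C) / 2 * ∫ τ in (1:ℝ)..t₀, φ τ
            ≤ Real.exp (-C) / 2 * ∫ τ in (1:ℝ)..t, φ τ :=
              mul_le_mul_of_nonneg_left hmonoI (by positivity)
          _ ≤ _ := key t h1t
      have hecpos : 0 < Real.exp (-C) / 2 := by positivity
      nlinarith [hle, hnn, hecpos]
    -- conclude f = 0 on [1,∞)
    intro τ₀ hτ₀
    by_contra hne
    have hpos : 0 < f τ₀ := lt_of_le_of_ne (hf τ₀ hτ₀) (Ne.symm hne)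
    have hcw : ContinuousWithinAt f (Set.Ici 1) τ₀ := hfcont τ₀ hτ₀
    have hev : ∀ᶠ x in nhdsWithin τ₀ (Set.Ici 1), f τ₀ / 2 < f x :=
      hcw.eventually (eventually_gt_nhds (half_lt_self hpos)) |>.mono (fun x hx => hx)
    obtain ⟨δ, hδpos, hball⟩ := Metric.mem_nhdsWithin_iff.mp hev
    set b : ℝ := τ₀ + δ / 2 with hbdef
    have hτ₀b : τ₀ < b := by rw [hbdef]; linarith
    have hposI : 0 < ∫ τ in τ₀..b, φ τ := by
      refine intervalIntegral.intervalIntegral_pos_of_pos_on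
        (hφii τ₀ b hτ₀ (by linarith)) ?_ hτ₀b
      intro x hx
      have hx1 : (1:ℝ) ≤ x := le_trans hτ₀ hx.1.le
      have hb2 : x < τ₀ + δ / 2 := hbdef ▸ hx.2
      have hdist : dist x τ₀ < δ := by
        rw [Real.dist_eq, abs_lt]
        constructor <;> [linarith [hx.1]; linarith]
      have hfx : f τ₀ / 2 < f x := hball ⟨Metric.mem_ball.mpr hdist, Set.mem_Ici.mpr hx1⟩
      have : 0 < f x := lt_of_le_of_lt (by positivity) hfx
      positivity
    have hadd := intervalIntegral.integral_add_adjacent_intervals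
      (hφii 1 τ₀ le_rfl hτ₀) (hφii τ₀ b hτ₀ (by linarith))
    rw [hI0 τ₀ hτ₀, hI0 b (by linarith)] at hadd
    linarith
  · intro hzero
    refine Tendsto.congr' ?_ (tendsto_const_nhds : Tendsto (fun _ : ℝ => (0:ℝ)) atTop (nhds 0))
    filter_upwards [eventually_ge_atTop (1:ℝ)] with t ht
    rw [intervalIntegral.integral_congr (g := fun _ => (0:ℝ)) ?_,
      intervalIntegral.integral_zero, mul_zero]
    intro τ hτ
    rw [Set.uIcc_of_le ht] at hτ
    simp [hzero τ hτ.1]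
end
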